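/- arXiv:2206.11132 — 8 statements merged into one kernel-verified Lean document; each statement's English description precedes it below -/
import Mathlib

section
/- For all countable ordinals α and β: α̇ ≤ β̇ in H_{ℵ₁}(𝟑) if and only if α ≤ β, and likewise α̈ ≤ β̈ if and only if α ≤ β; furthermore α̇ and β̈ are incomparable in H_{ℵ₁}(𝟑) (neither α̇ ≤ β̈ nor β̈ ≤ α̇). -/
/-- Hereditarily countable sets with urelements from the discrete order `{0,1,2}`:
urelements, and sets given as ranges of (small) indexed families. -/
inductive HC : Type 2 where
  | ur : Fin 3 → HC
  | sett : (ι : Type 1) → (ι → HC) → HC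

/-- The set-theoretic rank of an element of `HC`. -/
noncomputable def HC.rank : HC → Ordinal.{1}
  | .ur _ => 0
  | .sett _ f => ⨆ n, Order.succ (HC.rank (f n))

theorem HC.rank_lt {ι : Type 1} (f : ι → HC) (n : ι) :
    HC.rank (f n) < HC.rank (.sett ι f) := by
  have : Order.succ (HC.rank (f n)) ≤ HC.rank (.sett ι f) := by
    rw [HC.rank]
    exact le_ciSup (Ordinal.bddAbove_range.{1,1} _) n
  exact lt_of_lt_of_le (Order.lt_succ _) this

/-- The quasi order on `HC` (`{0,1,2}` carrying the discrete order). -/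
noncomputable def HC.le : HC → HC → Prop
  | .ur p, .ur q => p = q
  | .ur p, .sett _ g => ∃ m, HC.le (.ur p) (g m)
  | .sett _ f, .ur q => ∀ n, HC.le (f n) (.ur q)
  | .sett _ f, .sett _ g => ∀ n, ∃ m, HC.le (f n) (g m)
termination_by x y => (HC.rank x, HC.rank y)
decreasing_by
  · exact Prod.Lex.right _ (HC.rank_lt g m)
  · exact Prod.Lex.left _ _ (HC.rank_lt f n)
  · exact Prod.Lex.left _ _ (HC.rank_lt f n)

/-- The von Neumann style ordinal `α̇ = {0,1} ∪ {γ̇ : γ < α}`. -/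
noncomputable def HC.dot : Ordinal.{0} → HC := fun α =>
  HC.sett (ULift.{1} (Fin 2) ⊕ {γ : Ordinal.{0} // γ < α})
    (Sum.elim (fun i => HC.ur ⟨i.down.1, Nat.lt_succ_of_lt i.down.isLt⟩)
      (fun γ => HC.dot γ.1))
termination_by α => α
decreasing_by exact γ.2

/-- The von Neumann style ordinal `α̈ = {1,2} ∪ {γ̈ : γ < α}`. -/
noncomputable def HC.ddot : Ordinal.{0} → HC := fun α =>
  HC.sett (ULift.{1} (Fin 2) ⊕ {γ : Ordinal.{0} // γ < α})
    (Sum.elim (fun i => HC.ur ⟨i.down.1 + 1, Nat.succ_lt_succ i.down.isLt⟩)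
      (fun γ => HC.ddot γ.1))
termination_by α => α
decreasing_by exact γ.2

/-!
Both `α̇` and `α̈` are instances of one construction: the ordinal `α` with two fixed
urelements adjoined at every level. Monotonicity in `α` is immediate. Conversely, if
`γ < δ` and the code of `δ` were below that of `γ`, its element coded by `γ` would lie below
an element of the code of `γ`: not below an urelement, since it contains two different
urelements, and not below the code of some `ζ < γ`, by induction. Incomparability of `α̇`
and `β̈` comes from the urelement `0` (resp. `2`), which occurs in `α̇` (resp. `β̈`) but at no
level of `β̈` (resp. `α̇`).
-/

namespace HC

@[simp] theorem ur_le_ur {p q : Fin 3} : le (ur p) (ur q) ↔ p = q := by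
  rw [le]

@[simp] theorem ur_le_sett {p : Fin 3} {ι : Type 1} {g : ι → HC} :
    le (ur p) (sett ι g) ↔ ∃ m, le (ur p) (g m) := by
  rw [le]

@[simp] theorem sett_le_ur {ι : Type 1} {f : ι → HC} {q : Fin 3} :
    le (sett ι f) (ur q) ↔ ∀ n, le (f n) (ur q) := by
  rw [le]

@[simp] theorem sett_le_sett {ι κ : Type 1} {f : ι → HC} {g : κ → HC} :
    le (sett ι f) (sett κ g) ↔ ∀ n, ∃ m, le (f n) (g m) := by
  rw [le]

theorem ur_le_of_sett_le {ι κ : Type 1} {f : ι → HC} {g : κ → HC} {p : Fin 3} {n : ι}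
    (h : le (sett ι f) (sett κ g)) (hn : f n = ur p) : le (ur p) (sett κ g) := by
  obtain ⟨m, hm⟩ := sett_le_sett.1 h n
  exact ur_le_sett.2 ⟨m, hn ▸ hm⟩

theorem not_sett_le_ur {ι : Type 1} {f : ι → HC} {q : Fin 3} {n₀ n₁ : ι} {p₀ p₁ : Fin 3}
    (h₀ : f n₀ = ur p₀) (h₁ : f n₁ = ur p₁) (hp : p₀ ≠ p₁) : ¬ le (sett ι f) (ur q) := by
  intro h
  have hq₀ := h₀ ▸ sett_le_ur.1 h n₀
  have hq₁ := h₁ ▸ sett_le_ur.1 h n₁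
  exact hp ((ur_le_ur.1 hq₀).trans (ur_le_ur.1 hq₁).symm)

noncomputable def ordWith (u : Fin 2 → Fin 3) : Ordinal.{0} → HC := fun α =>
  sett (ULift.{1} (Fin 2) ⊕ {γ : Ordinal.{0} // γ < α})
    (Sum.elim (fun i => ur (u i.down)) (fun γ => ordWith u γ.1))
termination_by α => α
decreasing_by exact γ.2

theorem ordWith_castSucc (α : Ordinal.{0}) : ordWith Fin.castSucc α = dot α := by
  induction α using WellFoundedLT.induction with
  | ind α ih =>
    rw [ordWith, dot]
    congr 1
    funext x
    rcases x with i | γ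
    · rfl
    · exact ih γ.1 γ.2

theorem ordWith_succ (α : Ordinal.{0}) : ordWith Fin.succ α = ddot α := by
  induction α using WellFoundedLT.induction with
  | ind α ih =>
    rw [ordWith, ddot]
    congr 1
    funext x
    rcases x with i | γ
    · rfl
    · exact ih γ.1 γ.2

variable {u v : Fin 2 → Fin 3}

theorem ordWith_le_ordWith {α β : Ordinal.{0}} (h : α ≤ β) :
    le (ordWith u α) (ordWith u β) := by
  induction α using WellFoundedLT.induction generalizing β with
  | ind α ih =>
    rw [ordWith, ordWith, sett_le_sett]
    rintro (i | γ)
    · exact ⟨Sum.inl i, ur_le_ur.2 rfl⟩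
    · exact ⟨Sum.inr ⟨γ.1, γ.2.trans_le h⟩, ih γ.1 γ.2 le_rfl⟩

theorem not_ordWith_le_ordWith (hu : Function.Injective u) {α β : Ordinal.{0}} (h : β < α) :
    ¬ le (ordWith u α) (ordWith u β) := by
  induction β using WellFoundedLT.induction generalizing α with
  | ind β ih =>
    intro hle
    rw [ordWith, ordWith, sett_le_sett] at hle
    obtain ⟨m, hm⟩ := hle (Sum.inr ⟨β, h⟩)
    rcases m with i | ζ
    · simp only [Sum.elim_inl, Sum.elim_inr] at hm
      rw [ordWith] at hm
      exact not_sett_le_ur (n₀ := Sum.inl ⟨0⟩) (n₁ := Sum.inl ⟨1⟩) rfl rfl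
        (hu.ne (by decide)) hm
    · exact ih ζ.1 ζ.2 ζ.2 hm

theorem ordWith_le_ordWith_iff (hu : Function.Injective u) {α β : Ordinal.{0}} :
    le (ordWith u α) (ordWith u β) ↔ α ≤ β :=
  ⟨fun h => not_lt.1 fun hlt => not_ordWith_le_ordWith hu hlt h, ordWith_le_ordWith⟩

theorem not_ur_le_ordWith {p : Fin 3} (hp : p ∉ Set.range u) (β : Ordinal.{0}) :
    ¬ le (ur p) (ordWith u β) := by
  induction β using WellFoundedLT.induction with
  | ind β ih =>
    rw [ordWith, ur_le_sett]
    rintro ⟨i | γ, hm⟩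
    · exact hp ⟨i.down, (ur_le_ur.1 hm).symm⟩
    · exact ih γ.1 γ.2 hm

theorem not_ordWith_le_ordWith_of_notMem_range {i : Fin 2} (hi : u i ∉ Set.range v)
    (α β : Ordinal.{0}) : ¬ le (ordWith u α) (ordWith v β) := by
  intro h
  rw [ordWith, ordWith] at h
  exact not_ur_le_ordWith hi β <| by
    rw [ordWith]
    exact ur_le_of_sett_le (n := Sum.inl ⟨i⟩) h rfl

end HC

theorem stmt1_general (α β : Ordinal.{0}) :
    (HC.le (HC.dot α) (HC.dot β) ↔ α ≤ β) ∧
    (HC.le (HC.ddot α) (HC.ddot β) ↔ α ≤ β) ∧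
    ¬ HC.le (HC.dot α) (HC.ddot β) ∧ ¬ HC.le (HC.ddot β) (HC.dot α) := by
  simp only [← HC.ordWith_castSucc, ← HC.ordWith_succ]
  have zero_notMem : Fin.castSucc (0 : Fin 2) ∉ Set.range (Fin.succ : Fin 2 → Fin 3) := by
    simp
  have two_notMem : Fin.succ (1 : Fin 2) ∉ Set.range (Fin.castSucc : Fin 2 → Fin 3) := by
    simp
  exact ⟨HC.ordWith_le_ordWith_iff (Fin.castSucc_injective 2),
    HC.ordWith_le_ordWith_iff (Fin.succ_injective 2),
    HC.not_ordWith_le_ordWith_of_notMem_range zero_notMem α β,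
    HC.not_ordWith_le_ordWith_of_notMem_range two_notMem β α⟩

theorem stmt1 (α β : Ordinal.{0})
    (hα : α.card ≤ Cardinal.aleph0) (hβ : β.card ≤ Cardinal.aleph0) :
    (HC.le (HC.dot α) (HC.dot β) ↔ α ≤ β) ∧
    (HC.le (HC.ddot α) (HC.ddot β) ↔ α ≤ β) ∧
    ¬ HC.le (HC.dot α) (HC.ddot β) ∧ ¬ HC.le (HC.ddot β) (HC.dot α) :=
  stmt1_general α β
end

section
/- Let Q be a quasi order and n ≥ 1. If f : [ℕ]^n → P_f(Q) is a bad array (where [ℕ]^n, the set of strictly increasing n-tuples of natural numbers, is a barrier), then there exists a bad array g : [ℕ]^{n+1} → Q. -/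
/-!
Every `u ∈ [ℕ]^{n+1}` satisfies `u.take n ⊲ u.tail`, so badness of `f` provides some
`x ∈ f (u.take n)` lying below no element of `f u.tail`; let `g u` be such an `x`.
If `u ⊲ v` in `[ℕ]^{n+1}`, then `u.tail = v.take n`, so `g v ∈ f u.tail` and hence `g u ≰ g v`.
-/

/-- `s` is a finite strictly increasing sequence of naturals. -/
def IncrList (s : List ℕ) : Prop := s.Chain' (· < ·)

/-- `s` is an initial segment of the increasing enumeration of the infinite set
enumerated by the strictly monotone `g`. -/
def InitSegOf (s : List ℕ) (g : ℕ → ℕ) : Prop := s = (List.range s.length).map g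

/-- The relation `s ⊲ t`. -/
def TriRel (s t : List ℕ) : Prop :=
  ∃ g : ℕ → ℕ, StrictMono g ∧ InitSegOf s g ∧ InitSegOf t (fun i => g (i + 1))

/-- The array given by the values of `f` on `B` is good for the quasi order `r`. -/
def GoodArr {Q : Type*} (r : Q → Q → Prop) (B : Set (List ℕ)) (f : List ℕ → Q) : Prop :=
  ∃ s ∈ B, ∃ t ∈ B, TriRel s t ∧ r (f s) (f t)

/-- The order on finite subsets of a quasi order `r`:
`a ≤ b` iff each `x ∈ a` admits `y ∈ b` with `r x y`. -/
def PfLe {Q : Type*} (r : Q → Q → Prop) (a b : Finset Q) : Prop :=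
  ∀ x ∈ a, ∃ y ∈ b, r x y

namespace IncrList

variable {u : List ℕ}

theorem sublist {v : List ℕ} (hu : IncrList u) (hvu : v.Sublist u) : IncrList v :=
  List.IsChain.sublist hu hvu

theorem pairwise (hu : IncrList u) : u.Pairwise (· < ·) :=
  List.isChain_iff_pairwise.mp hu

theorem range (n : ℕ) : IncrList (List.range n) :=
  List.isChain_iff_pairwise.mpr List.pairwise_lt_range

theorem exists_strictMono_initSegOf (hu : IncrList u) :
    ∃ g : ℕ → ℕ, StrictMono g ∧ InitSegOf u g := by
  -- past the end of `u`, continue with `u.sum + i`, which exceeds every entry of `u`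
  refine ⟨fun i => if h : i < u.length then u[i] else u.sum + i, ?_, ?_⟩
  · intro i j hij
    dsimp only
    split_ifs with hi hj hj
    · exact List.pairwise_iff_getElem.mp hu.pairwise i j hi hj hij
    · exact (List.le_sum_of_mem (List.getElem_mem hi)).trans_lt (by omega)
    · omega
    · omega
  · refine List.ext_getElem (by simp) fun i hi _ => ?_
    simp [hi]

end IncrList

namespace InitSegOf

variable {u v : List ℕ} {g : ℕ → ℕ}

theorem take (hu : InitSegOf u g) (k : ℕ) : InitSegOf (u.take k) g := by
  unfold InitSegOf at *
  rw [hu]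
  simp [← List.map_take, List.take_range]

theorem tail (hu : InitSegOf u g) : InitSegOf u.tail (fun i => g (i + 1)) := by
  unfold InitSegOf at *
  refine List.ext_getElem (by simp) fun i hi _ => ?_
  rw [List.getElem_tail, List.getElem_of_eq hu]
  simp

theorem eq_take (hu : InitSegOf u g) (hv : InitSegOf v g) (huv : u.length ≤ v.length) :
    u = v.take u.length := by
  rw [hv.take u.length, List.length_take, min_eq_left huv]
  exact hu

end InitSegOf

theorem triRel_take_tail {u : List ℕ} (hu : IncrList u) (k : ℕ) : TriRel (u.take k) u.tail :=
  let ⟨g, hg, hug⟩ := hu.exists_strictMono_initSegOf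
  ⟨g, hg, hug.take k, hug.tail⟩

theorem TriRel.tail_eq_take {s t : List ℕ} {n : ℕ} (h : TriRel s t) (hs : s.length = n + 1)
    (ht : n ≤ t.length) : s.tail = t.take n := by
  obtain ⟨g, -, hsg, htg⟩ := h
  simpa [hs] using hsg.tail.eq_take htg (by simpa [hs] using ht)

theorem exists_not_goodArr_succ_of_not_goodArr_pfLe {Q : Type*} (r : Q → Q → Prop) (n : ℕ)
    (f : List ℕ → Finset Q) (hf : ¬ GoodArr (PfLe r) {s | s.length = n ∧ IncrList s} f) :
    ∃ g : List ℕ → Q, ¬ GoodArr r {s | s.length = n + 1 ∧ IncrList s} g := by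
  have hwit : ∀ u ∈ {s : List ℕ | s.length = n + 1 ∧ IncrList s},
      ∃ x ∈ f (u.take n), ∀ y ∈ f u.tail, ¬ r x y := by
    rintro u ⟨hlen, hu⟩
    by_contra! hle
    exact hf ⟨_, ⟨by simp [hlen], hu.sublist (List.take_sublist n u)⟩,
      _, ⟨by simp [hlen], hu.sublist (List.tail_sublist u)⟩, triRel_take_tail hu n, hle⟩
  have : Nonempty Q :=
    let ⟨x, _⟩ := hwit (List.range (n + 1)) ⟨List.length_range, IncrList.range _⟩
    ⟨x⟩
  choose! g hg_mem hg_bad using hwit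
  refine ⟨g, ?_⟩
  rintro ⟨u, hu, v, hv, huv, hr⟩
  have htail : u.tail = v.take n := huv.tail_eq_take hu.1 (by simp [hv.1])
  exact hg_bad u hu (g v) (htail ▸ hg_mem v hv) hr

theorem stmt2_general {Q : Type*} [Preorder Q] (n : ℕ) (f : List ℕ → Finset Q)
    (hf : ¬ GoodArr (PfLe ((· ≤ ·) : Q → Q → Prop))
      {s | s.length = n ∧ IncrList s} f) :
    ∃ g : List ℕ → Q,
      ¬ GoodArr ((· ≤ ·) : Q → Q → Prop) {s | s.length = n + 1 ∧ IncrList s} g :=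
  exists_not_goodArr_succ_of_not_goodArr_pfLe _ n f hf

theorem stmt2 {Q : Type*} [Preorder Q] (n : ℕ) (hn : 1 ≤ n) (f : List ℕ → Finset Q)
    (hf : ¬ GoodArr (PfLe ((· ≤ ·) : Q → Q → Prop))
      {s | s.length = n ∧ IncrList s} f) :
    ∃ g : List ℕ → Q,
      ¬ GoodArr ((· ≤ ·) : Q → Q → Prop) {s | s.length = n + 1 ∧ IncrList s} g :=
  stmt2_general n f hf
end

section
/- For any linear order α, the map h : ω^α → P_f(P_f(ω⊕α)) defined by h(⟨α₀,…,α_{n−1}⟩) = {{⟨0,i⟩,⟨1,α_i⟩} : i < n} is order reflecting: h(s) ≤ h(t) implies s ≼ t. -/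
/-- `s` is a non-increasing finite sequence. -/
def NonIncr {α : Type*} [Preorder α] (s : List α) : Prop := s.Chain' (· ≥ ·)

/-- The order on `ω^α` (finite non-increasing sequences). -/
def OmegaLe {α : Type*} [Preorder α] (s t : List α) : Prop :=
  (s.length ≤ t.length ∧ ∀ i (h₁ : i < s.length) (h₂ : i < t.length), s[i] = t[i]) ∨
  ∃ j, ∃ h₁ : j < s.length, ∃ h₂ : j < t.length,
    s[j] < t[j] ∧ ∀ i (hi : i < j), s[i]'(by omega) = t[i]'(by omega)

/-- The map `h : ω^α → P_f(P_f(ω⊕α))`, sending `⟨α₀,…,α_{n−1}⟩` to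
`{{⟨0,i⟩,⟨1,α_i⟩} : i < n}`. -/
def hMap {α : Type*} [LinearOrder α] (s : List α) : Finset (Finset (ℕ ⊕ α)) :=
  (((List.range s.length).zip s).map (fun p => ({Sum.inl p.1, Sum.inr p.2} : Finset (ℕ ⊕ α)))).toFinset

/-! If `h(s) ≤ h(t)`, the pair `{⟨0,i⟩, ⟨1,sᵢ⟩}` lies below some `{⟨0,j⟩, ⟨1,tⱼ⟩}`, so `i ≤ j`
and `sᵢ ≤ tⱼ ≤ tᵢ` because `t` is non-increasing. Thus `t` is at least as long as `s` and
dominates it pointwise, which forces `s ≼ t`: either `s` is a prefix of `t`, or at the first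
index where they differ `s` is strictly smaller. -/

theorem NonIncr.getElem_le_getElem {α : Type*} [Preorder α] {s : List α} (hs : NonIncr s)
    {i j : ℕ} (hij : i ≤ j) (hj : j < s.length) : s[j] ≤ s[i]'(hij.trans_lt hj) :=
  (List.IsChain.sortedGE hs).getElem_ge_getElem_of_le hij

theorem omegaLe_of_forall_getElem_le {α : Type*} [PartialOrder α] {s t : List α}
    (hle : ∀ i (hi : i < s.length), ∃ hi' : i < t.length, s[i] ≤ t[i]) : OmegaLe s t := by
  classical
  by_cases hall : ∀ i (h₁ : i < s.length) (h₂ : i < t.length), s[i] = t[i]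
  · refine .inl ⟨?_, hall⟩
    rcases s.length.eq_zero_or_pos with h0 | h0
    · omega
    · have := (hle _ (Nat.sub_one_lt_of_lt h0)).1
      omega
  · push Not at hall
    have hex : ∃ j, ∃ h₁ : j < s.length, ∃ h₂ : j < t.length, s[j] ≠ t[j] := hall
    obtain ⟨h₁, h₂, hne⟩ := Nat.find_spec hex
    refine .inr ⟨Nat.find hex, h₁, h₂, lt_of_le_of_ne (hle _ h₁).2 hne, fun i hi => ?_⟩
    by_contra hne'
    exact Nat.find_min hex hi ⟨_, _, hne'⟩

theorem pfLe_pair_iff {β γ : Type*} [DecidableEq β] [DecidableEq γ]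
    {r : β → β → Prop} {r' : γ → γ → Prop} {i j : β} {a b : γ} :
    PfLe (Sum.LiftRel r r') {.inl i, .inr a} {.inl j, .inr b} ↔ r i j ∧ r' a b := by
  simp [PfLe]

theorem mem_hMap_iff {α : Type*} [LinearOrder α] {s : List α} {x : Finset (ℕ ⊕ α)} :
    x ∈ hMap s ↔ ∃ i, ∃ hi : i < s.length, {.inl i, .inr s[i]} = x := by
  simp [hMap, List.mem_iff_getElem]

theorem getElem_le_of_pfLe_hMap {α : Type*} [LinearOrder α] {s t : List α} (ht : NonIncr t)
    (h : PfLe (PfLe (Sum.LiftRel ((· ≤ ·) : ℕ → ℕ → Prop) ((· ≤ ·) : α → α → Prop)))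
      (hMap s) (hMap t))
    (i : ℕ) (hi : i < s.length) : ∃ hi' : i < t.length, s[i] ≤ t[i] := by
  obtain ⟨y, hy, hle⟩ := h _ (mem_hMap_iff.2 ⟨i, hi, rfl⟩)
  obtain ⟨j, hj, rfl⟩ := mem_hMap_iff.1 hy
  obtain ⟨hij, hst⟩ := pfLe_pair_iff.1 hle
  exact ⟨hij.trans_lt hj, hst.trans (ht.getElem_le_getElem hij hj)⟩

theorem stmt3_general {α : Type*} [LinearOrder α] (s t : List α)
    (ht : NonIncr t)
    (h : PfLe (PfLe (Sum.LiftRel ((· ≤ ·) : ℕ → ℕ → Prop) ((· ≤ ·) : α → α → Prop)))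
      (hMap s) (hMap t)) :
    OmegaLe s t :=
  omegaLe_of_forall_getElem_le (getElem_le_of_pfLe_hMap ht h)

theorem stmt3 {α : Type*} [LinearOrder α] (s t : List α)
    (hs : NonIncr s) (ht : NonIncr t)
    (h : PfLe (PfLe (Sum.LiftRel ((· ≤ ·) : ℕ → ℕ → Prop) ((· ≤ ·) : α → α → Prop)))
      (hMap s) (hMap t)) :
    OmegaLe s t :=
  stmt3_general s t ht h
end

section
/- Let Ω be a well order. For all a,b ∈ TC(Ω⊕Ω): a ≤ b holds if and only if for each x ∈ E(a) there is y ∈ E(b) with x ≤ y. Moreover, there is a function 𝔵 : TC(Ω⊕Ω)² → TC(Ω⊕Ω) such that whenever a ≰ b, both 𝔵(a,b) ∈ E(a) and 𝔵(a,b) ≰ y for all y ∈ E(b). -/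
/-- `TCl(Ω⊕Ω)`: three base points together with two disjoint copies of `Ω`. -/
inductive TCl (Ω : Type*) where
  | base : Fin 3 → TCl Ω
  | dot : Ω → TCl Ω
  | ddot : Ω → TCl Ω

/-- The partial order on `TCl(Ω⊕Ω)`: the only strict inequalities are
`0,1 < α̇`, `1,2 < α̈`, and `α̇ < β̇`, `α̈ < β̈` for `α < β`. -/
def TCl.le {Ω : Type*} [Preorder Ω] : TCl Ω → TCl Ω → Prop
  | .base i, .base j => i = j
  | .base i, .dot _ => i = 0 ∨ i = 1
  | .base i, .ddot _ => i = 1 ∨ i = 2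
  | .dot α, .dot β => α ≤ β
  | .ddot α, .ddot β => α ≤ β
  | _, _ => False

/-- The set `E(a)`, representing the elements of the set named by `a`
(with `E(i) = {i}` for the base points). -/
def TCl.E {Ω : Type*} [Preorder Ω] : TCl Ω → Set (TCl Ω)
  | .base i => {.base i}
  | .dot α => {.base 0, .base 1} ∪ {x | ∃ γ, γ < α ∧ x = .dot γ}
  | .ddot α => {.base 1, .base 2} ∪ {x | ∃ γ, γ < α ∧ x = .ddot γ}

def TCl.chi {Ω : Type*} : TCl Ω → TCl Ω → TCl Ω
  | .base i, _ => .base i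
  | .dot _, .base j => if j = 0 then .base 1 else .base 0
  | .dot _, .ddot _ => .base 0
  | .dot _, .dot β => .dot β
  | .ddot _, .base j => if j = 1 then .base 2 else .base 1
  | .ddot _, .dot _ => .base 2
  | .ddot _, .ddot β => .ddot β

-- statement 4
theorem stmt4 {Ω : Type*} [LinearOrder Ω] [WellFoundedLT Ω] :
    (∀ a b : TCl Ω, TCl.le a b ↔ ∀ x ∈ TCl.E a, ∃ y ∈ TCl.E b, TCl.le x y) ∧
    ∃ χ : TCl Ω → TCl Ω → TCl Ω, ∀ a b : TCl Ω, ¬ TCl.le a b →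
      χ a b ∈ TCl.E a ∧ ∀ y ∈ TCl.E b, ¬ TCl.le (χ a b) y := by
  constructor
  · intro a b
    constructor
    · intro h x hx
      cases a <;> cases b <;> simp_all [TCl.le, TCl.E]
      case base.dot i β =>
        rcases h with h | h <;> subst h
        · exact ⟨.base 0, Or.inl (Or.inl rfl), rfl⟩
        · exact ⟨.base 1, Or.inl (Or.inr rfl), rfl⟩
      case base.ddot i β =>
        rcases h with h | h <;> subst h
        · exact ⟨.base 1, Or.inl (Or.inl rfl), rfl⟩
        · exact ⟨.base 2, Or.inl (Or.inr rfl), rfl⟩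
      case dot.dot α β =>
        rcases hx with (h1|h1) | ⟨γ, hγ, h1⟩ <;> subst h1
        · exact ⟨.base 0, Or.inl (Or.inl rfl), rfl⟩
        · exact ⟨.base 1, Or.inl (Or.inr rfl), rfl⟩
        · exact ⟨.dot γ, Or.inr ⟨γ, lt_of_lt_of_le hγ h, rfl⟩, le_refl γ⟩
      case ddot.ddot α β =>
        rcases hx with (h1|h1) | ⟨γ, hγ, h1⟩ <;> subst h1
        · exact ⟨.base 1, Or.inl (Or.inl rfl), rfl⟩
        · exact ⟨.base 2, Or.inl (Or.inr rfl), rfl⟩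
        · exact ⟨.ddot γ, Or.inr ⟨γ, lt_of_lt_of_le hγ h, rfl⟩, le_refl γ⟩
    · intro h
      cases a <;> cases b
      case base.base i j =>
        obtain ⟨y, hy, hle⟩ := h (.base i) rfl
        simp only [TCl.E, Set.mem_singleton_iff] at hy; subst hy; exact hle
      case base.dot i β =>
        obtain ⟨y, hy, hle⟩ := h (.base i) rfl
        rcases hy with (h1|h1) | ⟨γ, hγ, h1⟩ <;> subst h1 <;>
          simp_all [TCl.le]
      case base.ddot i β =>
        obtain ⟨y, hy, hle⟩ := h (.base i) rfl
        rcases hy with (h1|h1) | ⟨γ, hγ, h1⟩ <;> subst h1 <;>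
          simp_all [TCl.le]
      case dot.base α j =>
        obtain ⟨y, hy, hle⟩ := h (.base 0) (Or.inl (Or.inl rfl))
        obtain ⟨y', hy', hle'⟩ := h (.base 1) (Or.inl (Or.inr rfl))
        simp only [TCl.E, Set.mem_singleton_iff] at hy hy'
        subst hy; subst hy'
        simp only [TCl.le] at hle hle'
        exact absurd (hle.trans hle'.symm) (by decide)
      case ddot.base α j =>
        obtain ⟨y, hy, hle⟩ := h (.base 1) (Or.inl (Or.inl rfl))
        obtain ⟨y', hy', hle'⟩ := h (.base 2) (Or.inl (Or.inr rfl))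
        simp only [TCl.E, Set.mem_singleton_iff] at hy hy'
        subst hy; subst hy'
        simp only [TCl.le] at hle hle'
        exact absurd (hle.trans hle'.symm) (by decide)
      case dot.ddot α β =>
        obtain ⟨y, hy, hle⟩ := h (.base 0) (Or.inl (Or.inl rfl))
        rcases hy with (h1|h1) | ⟨γ, hγ, h1⟩ <;> subst h1 <;>
          simp_all [TCl.le]
      case ddot.dot α β =>
        obtain ⟨y, hy, hle⟩ := h (.base 2) (Or.inl (Or.inr rfl))
        rcases hy with (h1|h1) | ⟨γ, hγ, h1⟩ <;> subst h1 <;>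
          simp_all [TCl.le]
      case dot.dot α β =>
        show α ≤ β
        by_contra hab
        push_neg at hab
        obtain ⟨y, hy, hle⟩ := h (.dot β) (Or.inr ⟨β, hab, rfl⟩)
        rcases hy with (h1|h1) | ⟨γ, hγ, h1⟩ <;> subst h1 <;>
          simp_all [TCl.le]
        exact absurd (hle.trans_lt hγ) (lt_irrefl β)
      case ddot.ddot α β =>
        show α ≤ β
        by_contra hab
        push_neg at hab
        obtain ⟨y, hy, hle⟩ := h (.ddot β) (Or.inr ⟨β, hab, rfl⟩)
        rcases hy with (h1|h1) | ⟨γ, hγ, h1⟩ <;> subst h1 <;>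
          simp_all [TCl.le]
        exact absurd (hle.trans_lt hγ) (lt_irrefl β)
  · refine ⟨TCl.chi, ?_⟩
    intro a b hab
    cases a <;> cases b
    case base.base i j =>
      refine ⟨rfl, ?_⟩
      intro y hy
      simp only [TCl.E, Set.mem_singleton_iff] at hy; subst hy
      exact hab
    case base.dot i β =>
      refine ⟨rfl, ?_⟩
      intro y hy
      simp only [TCl.le, not_or] at hab
      rcases hy with (h1|h1) | ⟨γ, hγ, h1⟩ <;> subst h1 <;>
        simp only [TCl.chi, TCl.le] <;> tauto
    case base.ddot i β =>
      refine ⟨rfl, ?_⟩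
      intro y hy
      simp only [TCl.le, not_or] at hab
      rcases hy with (h1|h1) | ⟨γ, hγ, h1⟩ <;> subst h1 <;>
        simp only [TCl.chi, TCl.le] <;> tauto
    case dot.base α j =>
      constructor
      · show TCl.chi _ _ ∈ TCl.E _
        simp only [TCl.chi]
        split
        · exact Or.inl (Or.inr rfl)
        · exact Or.inl (Or.inl rfl)
      · intro y hy
        simp only [TCl.E, Set.mem_singleton_iff] at hy; subst hy
        simp only [TCl.chi]
        split
        · rename_i h; subst h; simp [TCl.le]
        · rename_i h; simp only [TCl.le]; exact fun hh => h hh.symm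
    case dot.ddot α β =>
      refine ⟨Or.inl (Or.inl rfl), ?_⟩
      intro y hy
      rcases hy with (h1|h1) | ⟨γ, hγ, h1⟩ <;> subst h1 <;>
        simp [TCl.chi, TCl.le]
    case dot.dot α β =>
      simp only [TCl.le, not_le] at hab
      refine ⟨Or.inr ⟨β, hab, rfl⟩, ?_⟩
      intro y hy
      rcases hy with (h1|h1) | ⟨γ, hγ, h1⟩ <;> subst h1 <;>
        simp [TCl.chi, TCl.le]
      exact hγ
    case ddot.base α j =>
      constructor
      · show TCl.chi _ _ ∈ TCl.E _
        simp only [TCl.chi]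
        split
        · exact Or.inl (Or.inr rfl)
        · exact Or.inl (Or.inl rfl)
      · intro y hy
        simp only [TCl.E, Set.mem_singleton_iff] at hy; subst hy
        simp only [TCl.chi]
        split
        · rename_i h; subst h; simp [TCl.le]
        · rename_i h; simp only [TCl.le]; exact fun hh => h hh.symm
    case ddot.dot α β =>
      refine ⟨Or.inl (Or.inr rfl), ?_⟩
      intro y hy
      rcases hy with (h1|h1) | ⟨γ, hγ, h1⟩ <;> subst h1 <;>
        simp [TCl.chi, TCl.le]
    case ddot.ddot α β =>
      simp only [TCl.le, not_le] at hab
      refine ⟨Or.inr ⟨β, hab, rfl⟩, ?_⟩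
      intro y hy
      rcases hy with (h1|h1) | ⟨γ, hγ, h1⟩ <;> subst h1 <;>
        simp [TCl.chi, TCl.le]
      exact hγ
end

section
/- Let Q = {q₀,…,q_{n−1}} be a quasi order with n elements. The map h : Q → P_f(ω⊕ω) defined by h(q_k) = {⟨0,k⟩, ⟨1,n−k⟩} is order reflecting: h(q_k) ≤ h(q_l) implies q_k ≤_Q q_l (indeed k = l). -/
-- statement 9: for a quasi order `Q = {q₀,…,q_{n−1}}` with `n` elements, the map
-- `h(q_k) = {⟨0,k⟩,⟨1,n−k⟩} ∈ P_f(ω⊕ω)` is order reflecting (indeed `k = l`).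
theorem stmt9 {Q : Type*} [Preorder Q] (n : ℕ) (q : Fin n → Q)
    (hq : Function.Bijective q) (k l : Fin n)
    (h : PfLe (Sum.LiftRel ((· ≤ ·) : ℕ → ℕ → Prop) ((· ≤ ·) : ℕ → ℕ → Prop))
      ({Sum.inl k.1, Sum.inr (n - k.1)} : Finset (ℕ ⊕ ℕ))
      ({Sum.inl l.1, Sum.inr (n - l.1)} : Finset (ℕ ⊕ ℕ))) :
    q k ≤ q l ∧ k = l := by
  have h1 := h (Sum.inl k.1) (by simp)
  have h2 := h (Sum.inr (n - k.1)) (by simp)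
  obtain ⟨y1, hy1, hr1⟩ := h1
  obtain ⟨y2, hy2, hr2⟩ := h2
  simp only [Finset.mem_insert, Finset.mem_singleton] at hy1 hy2
  have hkl : k.1 ≤ l.1 := by
    rcases hy1 with rfl | rfl
    · cases hr1; assumption
    · cases hr1
  have hlk : l.1 ≤ k.1 := by
    rcases hy2 with rfl | rfl
    · cases hr2
    · cases hr2 with
      | inr hle => omega
  have : k = l := Fin.ext (le_antisymm hkl hlk)
  exact ⟨this ▸ le_refl _, this⟩
end

section
/- For any linear order Ω, the relation ≺ is a strict linear order on ε_Ω: it is irreflexive, transitive, and for all s,t ∈ ε_Ω exactly one of s ≺ t, s = t, t ≺ s holds. -/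
/-- Terms for `ε_Ω`: either `ε_α` for `α ∈ Ω`, or a finite list (Cantor normal form). -/
inductive ET (Ω : Type*) where
  | eps : Ω → ET Ω
  | lst : List (ET Ω) → ET Ω

namespace ET

/-- The relation `≺` on terms. -/
def lt {Ω : Type*} [LT Ω] : ET Ω → ET Ω → Prop
  | .eps α, .eps β => α < β
  | .eps _, .lst [] => False
  | .eps α, .lst (t :: _) => lt (.eps α) t ∨ ET.eps α = t
  | .lst [], .eps _ => True
  | .lst (s :: _), .eps β => lt s (.eps β)
  | .lst ss, .lst ts =>
      (ss.length < ts.length ∧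
        ∀ i (h₁ : i < ss.length) (h₂ : i < ts.length), ss[i] = ts[i]) ∨
      ∃ j, ∃ h₁ : j < ss.length, ∃ h₂ : j < ts.length,
        lt ss[j] ts[j] ∧ ∀ i (hi : i < j), ss[i]'(by omega) = ts[i]'(by omega)
termination_by s t => sizeOf s + sizeOf t
decreasing_by
  all_goals simp_wf
  · omega
  · omega
  · have g1 := List.sizeOf_lt_of_mem (ss.getElem_mem h₁)
    have g2 := List.sizeOf_lt_of_mem (ts.getElem_mem h₂)
    omega

/-- Well-formedness: membership in `ε_Ω`. -/
def WF {Ω : Type*} [LT Ω] : ET Ω → Prop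
  | .eps _ => True
  | .lst ts => (∀ t, t ∈ ts → WF t) ∧
      (if ts.length = 1 then ∀ α, ts ≠ [ET.eps α]
       else ts.Chain' (fun a b => lt b a ∨ b = a))
termination_by t => sizeOf t
decreasing_by
  simp_wf
  have := List.sizeOf_lt_of_mem ‹t ∈ ts›
  omega

/-- The invariant `e`. -/
def e {Ω : Type*} [Bot Ω] : ET Ω → Ω
  | .eps α => α
  | .lst [] => ⊥
  | .lst (t :: _) => e t

/-- The invariant `d`. -/
def d {Ω : Type*} : ET Ω → ℕ
  | .eps _ => 0
  | .lst [] => 0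
  | .lst (t :: _) => d t + 1

end ET

/-!
On two lists `≺` is the lexicographic order `List.Lex` induced by `≺` itself, and between `ε_α`
and a list it compares `ε_α` with the leading entry. Irreflexivity, transitivity and trichotomy
therefore follow by well-founded induction on the sizes of the terms: the mixed cases recurse on
leading entries, and the list case uses the corresponding properties of `List.Lex`, which only
need to hold among the members of the lists compared.
-/

namespace List
variable {α : Type*} {r : α → α → Prop}

theorem lex_irrefl_of_forall_mem {l : List α} (h : ∀ x ∈ l, ¬ r x x) : ¬ Lex r l l := by
  induction l with
  | nil => exact not_lex_nil
  | cons a l ih =>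
    rw [cons_lex_cons_iff]
    rintro (haa | ⟨-, hl⟩)
    · exact h a mem_cons_self haa
    · exact ih (fun x hx => h x (mem_cons_of_mem a hx)) hl

theorem lex_trans_of_forall_mem {l₁ l₂ l₃ : List α}
    (h : ∀ x ∈ l₁, ∀ y ∈ l₂, ∀ z ∈ l₃, r x y → r y z → r x z)
    (h₁₂ : Lex r l₁ l₂) (h₂₃ : Lex r l₂ l₃) : Lex r l₁ l₃ := by
  induction l₁ generalizing l₂ l₃ with
  | nil =>
    obtain _ | ⟨c, l₃⟩ := l₃
    · exact absurd h₂₃ not_lex_nil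
    · exact Lex.nil
  | cons a l₁ ih =>
    obtain _ | ⟨b, l₂⟩ := l₂
    · exact absurd h₁₂ not_lex_nil
    obtain _ | ⟨c, l₃⟩ := l₃
    · exact absurd h₂₃ not_lex_nil
    rw [cons_lex_cons_iff] at h₁₂ h₂₃ ⊢
    rcases h₁₂ with hab | ⟨rfl, h₁₂⟩ <;> rcases h₂₃ with hbc | ⟨rfl, h₂₃⟩
    · exact Or.inl (h a mem_cons_self b mem_cons_self c mem_cons_self hab hbc)
    · exact Or.inl hab
    · exact Or.inl hbc
    · exact Or.inr ⟨rfl, ih (fun x hx y hy z hz => h x (mem_cons_of_mem a hx) y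
        (mem_cons_of_mem a hy) z (mem_cons_of_mem a hz)) h₁₂ h₂₃⟩

theorem lex_trichotomous_of_forall_mem {l₁ l₂ : List α}
    (h : ∀ x ∈ l₁, ∀ y ∈ l₂, r x y ∨ x = y ∨ r y x) : Lex r l₁ l₂ ∨ l₁ = l₂ ∨ Lex r l₂ l₁ := by
  induction l₁ generalizing l₂ with
  | nil => cases l₂ <;> simp
  | cons a l₁ ih =>
    cases l₂ with
    | nil => simp
    | cons b l₂ =>
      simp only [cons_lex_cons_iff, cons.injEq]
      rcases h a mem_cons_self b mem_cons_self with hab | rfl | hba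
      · exact Or.inl (Or.inl hab)
      · have := ih fun x hx y hy => h x (mem_cons_of_mem a hx) y (mem_cons_of_mem a hy)
        tauto
      · exact Or.inr (Or.inr (Or.inl hba))

end List

namespace ET
variable {Ω : Type*}

section LT
variable [LT Ω] {α β : Ω} {s t : ET Ω} {ss ts : List (ET Ω)}

@[simp] theorem eps_lt_eps : lt (eps α) (eps β : ET Ω) ↔ α < β := by rw [lt]

@[simp] theorem eps_lt_lst_cons : lt (eps α) (lst (t :: ts)) ↔ lt (eps α) t ∨ eps α = t := by
  rw [lt]

@[simp] theorem lst_cons_lt_eps : lt (lst (s :: ss)) (eps β) ↔ lt s (eps β) := by rw [lt]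

theorem lst_lt_lst_iff : lt (lst ss) (lst ts) ↔ List.Lex lt ss ts := by
  -- `List.lt_iff_exists` describes `List.Lex (· < ·)` by indices, as the definition of `lt` does.
  let _ : LT (ET Ω) := ⟨lt⟩
  rw [lt]
  change _ ↔ ss < ts
  rw [List.lt_iff_exists]
  refine or_congr ?_ ?_
  · constructor
    · rintro ⟨hlen, heq⟩
      refine ⟨List.ext_getElem (by simp; omega) fun i h₁ h₂ => ?_, hlen⟩
      simp [heq i h₁ (by omega)]
    · rintro ⟨heq, hlen⟩
      refine ⟨hlen, fun i h₁ h₂ => ?_⟩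
      rw [List.getElem_of_eq heq h₁]
      simp
  · exact exists_congr fun j => exists_congr fun _ => exists_congr fun _ => and_comm

theorem not_lt_lst_nil : ¬ lt s (lst []) := by
  cases s with
  | eps α => rw [lt]; exact id
  | lst ss => rw [lst_lt_lst_iff]; exact List.not_lex_nil

theorem lst_nil_lt_iff : lt (lst []) t ↔ t ≠ lst [] := by
  cases t with
  | eps β => rw [lt]; simp
  | lst ts => rw [lst_lt_lst_iff]; cases ts <;> simp

end LT

theorem lt_irrefl [Preorder Ω] : ∀ t : ET Ω, ¬ lt t t
  | eps α => by simp
  | lst ts => by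
    rw [lst_lt_lst_iff]
    exact List.lex_irrefl_of_forall_mem fun t _ => lt_irrefl t

theorem lt_trans [Preorder Ω] : ∀ {r s t : ET Ω}, lt r s → lt s t → lt r t
  | _, _, lst [], _, h => absurd h not_lt_lst_nil
  | _, lst [], _, h, _ => absurd h not_lt_lst_nil
  | lst [], _, _, _, h => lst_nil_lt_iff.2 fun ht => not_lt_lst_nil (ht ▸ h)
  | eps α, eps β, eps γ, h₁, h₂ => by
    rw [eps_lt_eps] at *
    exact h₁.trans h₂
  | eps α, eps β, lst (t :: ts), h₁, h₂ => by
    rw [eps_lt_lst_cons] at *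
    rcases h₂ with h₂ | rfl
    · exact Or.inl (lt_trans h₁ h₂)
    · exact Or.inl h₁
  | eps α, lst (s :: ss), eps γ, h₁, h₂ => by
    rw [eps_lt_lst_cons] at h₁
    rw [lst_cons_lt_eps] at h₂
    rcases h₁ with h₁ | rfl
    · exact lt_trans h₁ h₂
    · exact h₂
  | eps α, lst (s :: ss), lst (t :: ts), h₁, h₂ => by
    rw [eps_lt_lst_cons] at h₁ ⊢
    rw [lst_lt_lst_iff, List.cons_lex_cons_iff] at h₂
    rcases h₂ with h₂ | ⟨rfl, -⟩
    · rcases h₁ with h₁ | rfl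
      · exact Or.inl (lt_trans h₁ h₂)
      · exact Or.inl h₂
    · exact h₁
  | lst (s :: ss), eps β, eps γ, h₁, h₂ => by
    rw [lst_cons_lt_eps] at *
    exact lt_trans h₁ h₂
  | lst (s :: ss), eps β, lst (t :: ts), h₁, h₂ => by
    rw [lst_cons_lt_eps] at h₁
    rw [eps_lt_lst_cons] at h₂
    rw [lst_lt_lst_iff, List.cons_lex_cons_iff]
    rcases h₂ with h₂ | rfl
    · exact Or.inl (lt_trans h₁ h₂)
    · exact Or.inl h₁
  | lst (s :: ss), lst (t :: ts), eps γ, h₁, h₂ => by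
    rw [lst_lt_lst_iff, List.cons_lex_cons_iff] at h₁
    rw [lst_cons_lt_eps] at h₂ ⊢
    rcases h₁ with h₁ | ⟨rfl, -⟩
    · exact lt_trans h₁ h₂
    · exact h₂
  | lst ss, lst ts, lst us, h₁, h₂ => by
    rw [lst_lt_lst_iff] at *
    refine List.lex_trans_of_forall_mem (fun x hx y hy z hz => ?_) h₁ h₂
    have := List.sizeOf_lt_of_mem hx
    have := List.sizeOf_lt_of_mem hy
    have := List.sizeOf_lt_of_mem hz
    exact lt_trans
termination_by r s t => sizeOf r + sizeOf s + sizeOf t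

theorem lt_asymm [Preorder Ω] {s t : ET Ω} (h : lt s t) : ¬ lt t s :=
  fun h' => lt_irrefl s (lt_trans h h')

theorem lt_trichotomy [LinearOrder Ω] : ∀ s t : ET Ω, lt s t ∨ s = t ∨ lt t s
  | eps α, eps β => by simpa using _root_.lt_trichotomy α β
  | eps α, lst [] => Or.inr (Or.inr (lst_nil_lt_iff.2 (by simp)))
  | lst [], eps β => Or.inl (lst_nil_lt_iff.2 (by simp))
  | eps α, lst (t :: ts) => by
    rcases lt_trichotomy (eps α) t with h | rfl | h
    · exact Or.inl (eps_lt_lst_cons.2 (Or.inl h))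
    · exact Or.inl (eps_lt_lst_cons.2 (Or.inr rfl))
    · exact Or.inr (Or.inr (lst_cons_lt_eps.2 h))
  | lst (s :: ss), eps β => by
    rcases lt_trichotomy s (eps β) with h | rfl | h
    · exact Or.inl (lst_cons_lt_eps.2 h)
    · exact Or.inr (Or.inr (eps_lt_lst_cons.2 (Or.inr rfl)))
    · exact Or.inr (Or.inr (eps_lt_lst_cons.2 (Or.inl h)))
  | lst ss, lst ts => by
    rw [lst_lt_lst_iff, lst_lt_lst_iff, lst.injEq]
    exact List.lex_trichotomous_of_forall_mem fun s _ t _ => lt_trichotomy s t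

end ET

theorem stmt12 {Ω : Type*} [LinearOrder Ω] :
    (∀ s : ET Ω, ET.WF s → ¬ ET.lt s s) ∧
    (∀ r s t : ET Ω, ET.WF r → ET.WF s → ET.WF t →
      ET.lt r s → ET.lt s t → ET.lt r t) ∧
    (∀ s t : ET Ω, ET.WF s → ET.WF t →
      (ET.lt s t ∧ ¬ s = t ∧ ¬ ET.lt t s) ∨
      (¬ ET.lt s t ∧ s = t ∧ ¬ ET.lt t s) ∨
      (¬ ET.lt s t ∧ ¬ s = t ∧ ET.lt t s)) := by
  refine ⟨fun s _ => ET.lt_irrefl s, fun r s t _ _ _ => ET.lt_trans, fun s t _ _ => ?_⟩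
  rcases ET.lt_trichotomy s t with h | rfl | h
  · exact Or.inl ⟨h, fun hst => ET.lt_irrefl s (hst ▸ h), ET.lt_asymm h⟩
  · exact Or.inr (Or.inl ⟨ET.lt_irrefl s, rfl, ET.lt_irrefl s⟩)
  · exact Or.inr (Or.inr ⟨ET.lt_asymm h, fun hst => ET.lt_irrefl s (hst ▸ h), h⟩)
end

section
/- For any quasi order Q, there is a map h : T_f(Q) → T_f(Q⊕𝟏) that is an order embedding from T_f^s(Q) into T_f^w(Q⊕𝟏): for all a,b ∈ T_f(Q), a ≤^s b holds if and only if h(a) ≤^w h(b). -/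
/-- Finite ordered `Q`-labelled trees. -/
inductive TQ (Q : Type*) where
  | node : Q → List (TQ Q) → TQ Q

namespace TQ

/-- The strong order `≤ˢ` on finite `Q`-labelled trees. -/
def les {Q : Type*} [LE Q] : TQ Q → TQ Q → Prop
  | .node p as, .node q bs =>
      (p ≤ q ∧ ∀ a, a ∈ as → ∃ b, ∃ _ : b ∈ bs, les a b) ∨
      (∃ b, ∃ _ : b ∈ bs, les (.node p as) b)
termination_by a b => sizeOf a + sizeOf b
decreasing_by
  all_goals simp_wf
  · have h1 := List.sizeOf_lt_of_mem ‹_ ∈ as›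
    have h2 := List.sizeOf_lt_of_mem ‹_ ∈ bs›; omega
  · have := List.sizeOf_lt_of_mem ‹_ ∈ bs›; omega

/-- The weak order `≤ʷ` on finite `Q`-labelled trees. -/
def lew {Q : Type*} [LE Q] : TQ Q → TQ Q → Prop
  | .node p as, .node q bs =>
      (p ≤ q ∧ ∀ a, a ∈ as → lew a (.node q bs)) ∨
      (∃ b, ∃ _ : b ∈ bs, lew (.node p as) b)
termination_by a b => sizeOf a + sizeOf b
decreasing_by
  all_goals simp_wf
  · have := List.sizeOf_lt_of_mem ‹_ ∈ as›; omega
  · have := List.sizeOf_lt_of_mem ‹_ ∈ bs›; omega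

lemma les_node {Q : Type*} [LE Q] (p q : Q) (as bs : List (TQ Q)) :
    les (node p as) (node q bs) ↔
      (p ≤ q ∧ ∀ a, a ∈ as → ∃ b, ∃ _ : b ∈ bs, les a b) ∨
      (∃ b, ∃ _ : b ∈ bs, les (node p as) b) := by
  rw [les]

lemma lew_node {Q : Type*} [LE Q] (p q : Q) (as bs : List (TQ Q)) :
    lew (node p as) (node q bs) ↔
      (p ≤ q ∧ ∀ a, a ∈ as → lew a (node q bs)) ∨
      (∃ b, ∃ _ : b ∈ bs, lew (node p as) b) := by
  rw [lew]

universe uu vv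

def emb {Q : Type uu} : TQ Q → TQ (Q ⊕ PUnit.{vv+1})
  | .node p as => .node (Sum.inl p)
      (as.attach.map fun x => .node (Sum.inr PUnit.unit) [emb x.1])
termination_by a => sizeOf a
decreasing_by
  simp_wf
  have := List.sizeOf_lt_of_mem x.2
  omega

lemma les_of_mem {Q : Type*} [LE Q] {a c : TQ Q} {q : Q} {bs : List (TQ Q)}
    (h : les a c) (hc : c ∈ bs) : les a (.node q bs) := by
  obtain ⟨p, as⟩ := a
  rw [les]
  exact Or.inr ⟨c, hc, h⟩

lemma sizeOf_pos {Q : Type*} (a : TQ Q) : 1 ≤ sizeOf a := by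
  obtain ⟨p, as⟩ := a; simp

lemma mem_emb_children {Q : Type uu} (bs : List (TQ Q)) (c : TQ (Q ⊕ PUnit.{vv+1})) :
    c ∈ (bs.attach.map fun x => TQ.node (Sum.inr PUnit.unit) [emb x.1]) ↔
      ∃ d ∈ bs, c = TQ.node (Sum.inr PUnit.unit) [emb d] := by
  simp [List.mem_map]
  constructor
  · rintro ⟨d, hd, rfl⟩; exact ⟨d, hd, rfl⟩
  · rintro ⟨d, hd, rfl⟩; exact ⟨d, hd, rfl⟩

/-- unwrapping: `emb a ≤ʷ ★⟨t⟩ ↔ emb a ≤ʷ t`. -/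
lemma lew_emb_star {Q : Type uu} [Preorder Q] (a : TQ Q) (t : TQ (Q ⊕ PUnit.{vv+1})) :
    lew (emb a) (node (Sum.inr PUnit.unit) [t]) ↔ lew (emb a) t := by
  obtain ⟨p, as⟩ := a
  rw [emb, lew_node]
  simp [Sum.not_inl_le_inr]

/-- unfolded variant -/
lemma lew_inl_star {Q : Type uu} [Preorder Q] (p : Q) (A : List (TQ (Q ⊕ PUnit.{vv+1})))
    (u : PUnit.{vv+1}) (t : TQ (Q ⊕ PUnit.{vv+1})) :
    lew (node (Sum.inl p) A) (node (Sum.inr u) [t]) ↔ lew (node (Sum.inl p) A) t := by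
  rw [lew_node]
  simp [Sum.not_inl_le_inr]

lemma key {Q : Type uu} [Preorder Q] : ∀ (n : ℕ) (a b : TQ Q), sizeOf a + sizeOf b ≤ n →
    (les a b ↔ lew (emb a) (emb.{uu, vv} b)) ∧
    ∀ q bs, b = node q bs →
      (lew (TQ.node (Sum.inr PUnit.unit) [emb.{uu, vv} a]) (emb b) ↔ ∃ c ∈ bs, les a c) := by
  intro n
  induction n with
  | zero =>
    intro a b h
    have := sizeOf_pos a; have := sizeOf_pos b; omega
  | succ n ih =>
    intro a b hab
    obtain ⟨p, as⟩ := a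
    obtain ⟨q, bs⟩ := b
    have hsa : ∀ x ∈ as, sizeOf x < sizeOf (TQ.node p as) := by
      intro x hx; have := List.sizeOf_lt_of_mem hx; simp; omega
    have hsb : ∀ x ∈ bs, sizeOf x < sizeOf (TQ.node q bs) := by
      intro x hx; have := List.sizeOf_lt_of_mem hx; simp; omega
    -- part 2 first (as a `have`)
    have part2 : ∀ (a : TQ Q), sizeOf a ≤ sizeOf (TQ.node p as) →
        (lew (TQ.node (Sum.inr PUnit.unit) [emb a]) (emb (TQ.node q bs)) ↔
          ∃ c ∈ bs, les a c) := by
      intro a ha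
      rw [emb, lew_node]
      simp only [Sum.not_inr_le_inl, false_and, false_or]
      constructor
      · rintro ⟨c, hc, hlew⟩
        rw [mem_emb_children] at hc
        obtain ⟨d, hd, rfl⟩ := hc
        have hsize : sizeOf a + sizeOf d ≤ n := by
          have := hsb d hd; omega
        rw [lew_node] at hlew
        rcases hlew with ⟨-, hall⟩ | ⟨e, he, hlew⟩
        · -- lew (emb a) (★⟨emb d⟩), hence lew (emb a) (emb d), hence les a d
          have h1 := hall (emb a) (List.mem_singleton.mpr rfl)
          rw [lew_emb_star] at h1
          exact ⟨d, hd, ((ih a d hsize).1).mpr h1⟩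
        · -- lew (★⟨emb a⟩) (emb d) : use ih part 2
          simp only [List.mem_singleton] at he
          subst he
          obtain ⟨r, ds⟩ := d
          obtain ⟨c', hc', hle⟩ := ((ih a _ hsize).2 r ds rfl).mp hlew
          exact ⟨_, hd, les_of_mem hle hc'⟩
      · rintro ⟨c, hc, hle⟩
        refine ⟨TQ.node (Sum.inr PUnit.unit) [emb c], (mem_emb_children bs _).mpr ⟨c, hc, rfl⟩, ?_⟩
        rw [lew_node]
        refine Or.inl ⟨le_refl _, ?_⟩
        intro x hx
        simp only [List.mem_singleton] at hx; subst hx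
        rw [lew_emb_star]
        have hsize : sizeOf a + sizeOf c ≤ n := by have := hsb c hc; omega
        exact ((ih a c hsize).1).mp hle
    refine ⟨?_, ?_⟩
    · -- part 1
      rw [les_node]
      conv_rhs => rw [emb, emb, lew_node]
      constructor
      · rintro (⟨hpq, hall⟩ | ⟨c, hc, hle⟩)
        · refine Or.inl ⟨Sum.inl_le_inl_iff.mpr hpq, ?_⟩
          intro x hx
          rw [mem_emb_children] at hx
          obtain ⟨d, hd, rfl⟩ := hx
          have : lew (TQ.node (Sum.inr PUnit.unit) [emb d]) (emb (TQ.node q bs)) := by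
            rw [part2 d (le_of_lt (hsa d hd))]
            obtain ⟨c, hc, hle⟩ := hall d hd
            exact ⟨c, hc, hle⟩
          rw [emb] at this
          exact this
        · refine Or.inr ?_
          refine ⟨TQ.node (Sum.inr PUnit.unit) [emb c], (mem_emb_children bs _).mpr ⟨c, hc, rfl⟩, ?_⟩
          rw [lew_inl_star, ← emb]
          have hsize : sizeOf (TQ.node p as) + sizeOf c ≤ n := by have := hsb c hc; omega
          exact ((ih _ c hsize).1).mp hle
      · rintro (⟨hpq, hall⟩ | ⟨c, hc, hle⟩)
        · refine Or.inl ⟨Sum.inl_le_inl_iff.mp hpq, ?_⟩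
          intro d hd
          have h1 := hall (TQ.node (Sum.inr PUnit.unit) [emb d])
            ((mem_emb_children as _).mpr ⟨d, hd, rfl⟩)
          rw [← emb] at h1
          rw [part2 d (le_of_lt (hsa d hd))] at h1
          obtain ⟨c, hc, hle⟩ := h1
          exact ⟨c, hc, hle⟩
        · rw [mem_emb_children] at hc
          obtain ⟨d, hd, rfl⟩ := hc
          rw [lew_inl_star, ← emb] at hle
          have hsize : sizeOf (TQ.node p as) + sizeOf d ≤ n := by have := hsb d hd; omega
          exact Or.inr ⟨d, hd, ((ih _ d hsize).1).mpr hle⟩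
    · rintro q' bs' h
      injection h with h1 h2
      subst h1; subst h2
      exact part2 _ (le_refl _)

end TQ

-- statement 17
theorem stmt17 {Q : Type*} [Preorder Q] :
    ∃ h : TQ Q → TQ (Q ⊕ PUnit), ∀ a b : TQ Q,
      TQ.les a b ↔ TQ.lew (h a) (h b) := by
  refine ⟨TQ.emb, fun a b => ?_⟩
  exact (TQ.key (sizeOf a + sizeOf b) a b (le_refl _)).1
end

section
/- Let Q be a quasi order and x,y ∈ H_f(Q), q ∈ Q. If p ≤_Q q for every p ∈ supp(x), and there exists p ∈ supp(y) with q ≤_Q p or (y is the urelement of some q' with q ≤_Q q'), then x ≤ y. Equivalently, in H_f(Q): if supp(x) ≤ q and q ≤ supp(y) (where the finite sets supp(x), supp(y) ⊆ Q are regarded as the elements of H_f(Q) whose members are the corresponding urelements, and q is regarded as an urelement), then x ≤ y. -/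
/-- Hereditarily finite sets with urelements from `Q`. -/
inductive HF (Q : Type*) where
  | ur : Q → HF Q
  | set : List (HF Q) → HF Q

namespace HF

/-- The quasi order on `HF Q`. -/
def le {Q : Type*} [LE Q] : HF Q → HF Q → Prop
  | .ur p, .ur q => p ≤ q
  | .ur p, .set b => ∃ y, ∃ _ : y ∈ b, le (.ur p) y
  | .set a, .ur q => ∀ x, x ∈ a → le x (.ur q)
  | .set a, .set b => ∀ x, x ∈ a → ∃ y, ∃ _ : y ∈ b, le x y
termination_by x y => sizeOf x + sizeOf y
decreasing_by
  all_goals simp_wf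
  · have := List.sizeOf_lt_of_mem ‹_ ∈ b›; omega
  · have := List.sizeOf_lt_of_mem ‹_ ∈ a›; omega
  · have h1 := List.sizeOf_lt_of_mem ‹_ ∈ a›
    have h2 := List.sizeOf_lt_of_mem ‹_ ∈ b›; omega

/-- The support of an element of `HF Q`: the list of urelements occurring in it. -/
def supp {Q : Type*} : HF Q → List Q
  | .ur q => [q]
  | .set a => a.attach.flatMap (fun x => supp x.1)
termination_by x => sizeOf x
decreasing_by
  simp_wf
  have := List.sizeOf_lt_of_mem x.2; omega

end HF

/-! Choose `p ∈ supp y` with `q ≤ p` and induct on `x`, keeping `p ∈ supp y` as the invariant.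
An urelement `r ≤ q ≤ p` of `x` lies below the occurrence of `p` in `y`. If `x` is a set, each of its
members again has support below `q`; when `y` is a set too, all of them are compared with the one
member of `y` whose support contains `p`. -/

namespace HF

variable {Q : Type*}

theorem mem_supp_ur {p q : Q} : p ∈ supp (.ur q) ↔ p = q := by
  rw [supp, List.mem_singleton]

theorem mem_supp_set {p : Q} {a : List (HF Q)} : p ∈ supp (.set a) ↔ ∃ x ∈ a, p ∈ supp x := by
  rw [supp]
  simp

theorem set_map_ur_le_ur_iff [LE Q] {l : List Q} {q : Q} :
    le (.set (l.map ur)) (.ur q) ↔ ∀ p ∈ l, p ≤ q := by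
  rw [le]
  simp only [List.mem_map, forall_exists_index, and_imp, forall_apply_eq_imp_iff₂]
  simp only [le]

theorem ur_le_set_map_ur_iff [LE Q] {l : List Q} {q : Q} :
    le (.ur q) (.set (l.map ur)) ↔ ∃ p ∈ l, q ≤ p := by
  rw [le]
  simp only [List.mem_map, exists_prop, exists_exists_and_eq_and]
  simp only [le]

theorem ur_le_of_le_mem_supp [LE Q] {r p : Q} (hrp : r ≤ p) :
    ∀ {y : HF Q}, p ∈ y.supp → le (.ur r) y
  | .ur s, hp => by
    rw [le, ← mem_supp_ur.1 hp]
    exact hrp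
  | .set b, hp => by
    obtain ⟨y, hy, hpy⟩ := mem_supp_set.1 hp
    rw [le]
    exact ⟨y, hy, ur_le_of_le_mem_supp hrp hpy⟩
termination_by y => sizeOf y
decreasing_by
  have := List.sizeOf_lt_of_mem hy
  simp only [set.sizeOf_spec]
  omega

theorem le_of_supp_le_of_le_mem_supp [Preorder Q] {q p : Q} (hqp : q ≤ p) :
    ∀ {x y : HF Q}, (∀ r ∈ x.supp, r ≤ q) → p ∈ y.supp → le x y
  | .ur r, _, hx, hp => ur_le_of_le_mem_supp ((hx r (mem_supp_ur.2 rfl)).trans hqp) hp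
  | .set a, .ur s, hx, hp => by
    rw [le]
    intro x hxa
    exact le_of_supp_le_of_le_mem_supp hqp
      (fun r hr => hx r (mem_supp_set.2 ⟨x, hxa, hr⟩)) hp
  | .set a, .set b, hx, hp => by
    obtain ⟨y, hyb, hpy⟩ := mem_supp_set.1 hp
    rw [le]
    intro x hxa
    exact ⟨y, hyb, le_of_supp_le_of_le_mem_supp hqp
      (fun r hr => hx r (mem_supp_set.2 ⟨x, hxa, hr⟩)) hpy⟩
termination_by x => sizeOf x
decreasing_by
  all_goals
    have := List.sizeOf_lt_of_mem hxa
    simp only [set.sizeOf_spec]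
    omega

end HF

theorem stmt18 {Q : Type*} [Preorder Q] (x y : HF Q) (q : Q)
    (h1 : HF.le (HF.set ((HF.supp x).map HF.ur)) (HF.ur q))
    (h2 : HF.le (HF.ur q) (HF.set ((HF.supp y).map HF.ur))) :
    HF.le x y := by
  obtain ⟨p, hp, hqp⟩ := HF.ur_le_set_map_ur_iff.1 h2
  exact HF.le_of_supp_le_of_le_mem_supp hqp (HF.set_map_ur_le_ur_iff.1 h1) hp
end
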